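/- Safety of the screening rule: suppose (β̄, ᾱ) ∈ ℝ^p × ℝ^n is a saddle point of L. Let α ∈ ℝ^n, β ∈ ℝ^p and set r = √(2(P(β) − D(α))). If an index j satisfies |⟨x_j, α⟩| + ‖x_j‖·r < 2√(λ₀λ₂) + λ₁, then β̄_j = 0. -/

import Mathlib

noncomputable section

/-- ℓ₀ "norm": number of nonzero entries, as a real number. -/
def zeroNorm {p : ℕ} (β : EuclideanSpace ℝ (Fin p)) : ℝ :=
  ((Finset.univ.filter fun j => β j ≠ 0).card : ℝ)

/-- ℓ₁ norm. -/
def oneNorm {p : ℕ} (β : EuclideanSpace ℝ (Fin p)) : ℝ := ∑ j, |β j|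

/-- `X β`, where `x j` is the `j`-th column of `X`. -/
def Xmul {n p : ℕ} (x : Fin p → EuclideanSpace ℝ (Fin n))
    (β : EuclideanSpace ℝ (Fin p)) : EuclideanSpace ℝ (Fin n) :=
  ∑ j, β j • x j

/-- Primal objective `P(β)`. -/
def Pobj {n p : ℕ} (x : Fin p → EuclideanSpace ℝ (Fin n)) (y : EuclideanSpace ℝ (Fin n))
    (l0 l1 l2 : ℝ) (β : EuclideanSpace ℝ (Fin p)) : ℝ :=
  (1/2) * ‖y - Xmul x β‖^2 + l0 * zeroNorm β + l1 * oneNorm β + l2 * ‖β‖^2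

/-- Lagrangian `L(β, α)`. -/
def Lag {n p : ℕ} (x : Fin p → EuclideanSpace ℝ (Fin n)) (y : EuclideanSpace ℝ (Fin n))
    (l0 l1 l2 : ℝ) (β : EuclideanSpace ℝ (Fin p)) (α : EuclideanSpace ℝ (Fin n)) : ℝ :=
  (inner ℝ α (Xmul x β) : ℝ) - (1/2) * ‖α‖^2 - (inner ℝ y α : ℝ)
    + l0 * zeroNorm β + l1 * oneNorm β + l2 * ‖β‖^2

/-- `η_j(α) = −⟨x_j, α⟩ / (2 λ₂)`. -/
def etav {n p : ℕ} (x : Fin p → EuclideanSpace ℝ (Fin n)) (l2 : ℝ)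
    (α : EuclideanSpace ℝ (Fin n)) (j : Fin p) : ℝ :=
  -(inner ℝ (x j) α : ℝ) / (2 * l2)

/-- Threshold `η₀ = (2√(λ₀λ₂) + λ₁)/(2λ₂)`. -/
def eta0 (l0 l1 l2 : ℝ) : ℝ := (2 * Real.sqrt (l0 * l2) + l1) / (2 * l2)

/-- Scalar function `ψ` appearing in the dual objective. -/
def psi (l0 l1 l2 : ℝ) (t : ℝ) : ℝ :=
  if eta0 l0 l1 l2 ≤ |t| then -l2 * (|t| - l1 / (2 * l2))^2 + l0 else 0

/-- Dual objective `D(α)` for the square loss. -/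
def Dobj {n p : ℕ} (x : Fin p → EuclideanSpace ℝ (Fin n)) (y : EuclideanSpace ℝ (Fin n))
    (l0 l1 l2 : ℝ) (α : EuclideanSpace ℝ (Fin n)) : ℝ :=
  -(1/2) * ‖α‖^2 - (inner ℝ y α : ℝ) + ∑ j : Fin p, psi l0 l1 l2 (etav x l2 α j)

/-- Thresholding map `𝔅`. -/
def Bth (l0 l1 l2 : ℝ) (t : ℝ) : ℝ :=
  if eta0 l0 l1 l2 ≤ |t| then Real.sign t * (|t| - l1 / (2 * l2)) else 0

/-- Primal-dual link `β(α)` with entries `β_j(α) = 𝔅(η_j(α))`. -/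
def betaOf {n p : ℕ} (x : Fin p → EuclideanSpace ℝ (Fin n)) (l0 l1 l2 : ℝ)
    (α : EuclideanSpace ℝ (Fin n)) : EuclideanSpace ℝ (Fin p) :=
  WithLp.toLp 2 (fun j => Bth l0 l1 l2 (etav x l2 α j))

/-- `(β̄, ᾱ)` is a saddle point of the Lagrangian `L`. -/
def IsSaddle {n p : ℕ} (x : Fin p → EuclideanSpace ℝ (Fin n)) (y : EuclideanSpace ℝ (Fin n))
    (l0 l1 l2 : ℝ) (βb : EuclideanSpace ℝ (Fin p)) (αb : EuclideanSpace ℝ (Fin n)) : Prop :=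
  (∀ α, Lag x y l0 l1 l2 βb α ≤ Lag x y l0 l1 l2 βb αb) ∧
  (∀ β, Lag x y l0 l1 l2 βb αb ≤ Lag x y l0 l1 l2 β αb)

/-!
At a saddle point the inner maximisation over `α` is an explicit concave quadratic, so
`ᾱ = Xβ̄ - y` and `L(β̄, α) = L(β̄, ᾱ) - ‖α - ᾱ‖² / 2`. Together with `D(α) ≤ L(β̄, α)` (the dual
objective is the coordinatewise minimum of `L(·, α)`) and `L(β, ᾱ) ≤ P(β)`, this yields
`‖α - ᾱ‖ ≤ r`. On the other hand `L(·, ᾱ)` is separable and minimised by `β̄`, so comparing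
`β̄_j` with `0` and using AM-GM `λ₀ + λ₂ b² ≥ 2√(λ₀λ₂)|b|` shows that `β̄_j ≠ 0` forces
`|⟨x_j, ᾱ⟩| ≥ 2√(λ₀λ₂) + λ₁`. Cauchy–Schwarz transfers this to `|⟨x_j, α⟩| + ‖x_j‖ r`,
contradicting the screening test.
-/

/-- The `j`-th summand of the Lagrangian, with `c = ⟨x_j, α⟩` and `b = β_j`. -/
def lagTerm (l0 l1 l2 c b : ℝ) : ℝ :=
  c * b + l0 * (if b ≠ 0 then 1 else 0) + l1 * |b| + l2 * b ^ 2

@[simp]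
lemma lagTerm_zero (l0 l1 l2 c : ℝ) : lagTerm l0 l1 l2 c 0 = 0 := by
  simp [lagTerm]

section Scalar

variable {l0 l1 l2 : ℝ}

lemma two_sqrt_mul_mul_abs_le (hl0 : 0 ≤ l0) (hl2 : 0 ≤ l2) (b : ℝ) :
    2 * Real.sqrt (l0 * l2) * |b| ≤ l0 + l2 * b ^ 2 := by
  have h := two_mul_le_add_sq (Real.sqrt l0) (Real.sqrt l2 * |b|)
  rw [mul_pow, Real.sq_sqrt hl0, Real.sq_sqrt hl2, sq_abs] at h
  rw [Real.sqrt_mul hl0]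
  linarith

lemma sub_abs_mul_abs_le_lagTerm (hl0 : 0 ≤ l0) (hl2 : 0 ≤ l2) (c : ℝ) {b : ℝ} (hb : b ≠ 0) :
    (2 * Real.sqrt (l0 * l2) + l1 - |c|) * |b| ≤ lagTerm l0 l1 l2 c b := by
  have hcb : -(|c| * |b|) ≤ c * b := abs_mul c b ▸ neg_abs_le _
  have := two_sqrt_mul_mul_abs_le hl0 hl2 b
  simp only [lagTerm, hb, ne_eq, not_false_eq_true, if_true]
  linarith

lemma le_abs_of_lagTerm_nonpos (hl0 : 0 ≤ l0) (hl2 : 0 ≤ l2) {c b : ℝ} (hb : b ≠ 0)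
    (h : lagTerm l0 l1 l2 c b ≤ 0) : 2 * Real.sqrt (l0 * l2) + l1 ≤ |c| := by
  have := (sub_abs_mul_abs_le_lagTerm hl0 hl2 c hb).trans h
  have := nonpos_of_mul_nonpos_left this (abs_pos.mpr hb)
  linarith

lemma psi_neg_div (hl2 : 0 < l2) (c : ℝ) :
    psi l0 l1 l2 (-c / (2 * l2)) =
      if 2 * Real.sqrt (l0 * l2) + l1 ≤ |c| then l0 - (|c| - l1) ^ 2 / (4 * l2) else 0 := by
  have h2l2 : 0 < 2 * l2 := by positivity
  have habs : |-c / (2 * l2)| = |c| / (2 * l2) := by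
    rw [abs_div, abs_neg, abs_of_pos h2l2]
  simp only [psi, eta0, habs, div_le_div_iff_of_pos_right h2l2]
  congr 1
  field_simp
  ring

lemma psi_neg_div_le_lagTerm (hl0 : 0 ≤ l0) (hl2 : 0 < l2) (c b : ℝ) :
    psi l0 l1 l2 (-c / (2 * l2)) ≤ lagTerm l0 l1 l2 c b := by
  rw [psi_neg_div hl2]
  split_ifs with hc
  · by_cases hb : b = 0
    · have hs : Real.sqrt (l0 * l2) ^ 2 = l0 * l2 := Real.sq_sqrt (by positivity)
      have hs0 : 0 ≤ Real.sqrt (l0 * l2) := Real.sqrt_nonneg _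
      have hsq : 4 * l0 * l2 ≤ (|c| - l1) ^ 2 := by nlinarith
      have : l0 ≤ (|c| - l1) ^ 2 / (4 * l2) := by rw [le_div_iff₀ (by positivity)]; linarith
      rw [hb, lagTerm_zero]
      linarith
    · -- completing the square in `|b|`
      have hcb : -(|c| * |b|) ≤ c * b := abs_mul c b ▸ neg_abs_le _
      have hsq : 0 ≤ (2 * l2 * |b| - (|c| - l1)) ^ 2 / (4 * l2) := by positivity
      have expand : (2 * l2 * |b| - (|c| - l1)) ^ 2 / (4 * l2)
          = l2 * b ^ 2 - (|c| - l1) * |b| + (|c| - l1) ^ 2 / (4 * l2) := by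
        field_simp
        rw [← sq_abs b]
        ring
      simp only [lagTerm, hb, ne_eq, not_false_eq_true, if_true]
      linarith
  · by_cases hb : b = 0
    · rw [hb, lagTerm_zero]
    · have := sub_abs_mul_abs_le_lagTerm (l1 := l1) hl0 hl2.le c hb
      have : 0 ≤ (2 * Real.sqrt (l0 * l2) + l1 - |c|) * |b| :=
        mul_nonneg (by linarith) (abs_nonneg b)
      linarith

end Scalar

lemma apply_le_of_sum_le {ι α M : Type*} [Fintype ι] [DecidableEq ι] [AddCommMonoid M]
    [PartialOrder M] [IsOrderedCancelAddMonoid M] {f : ι → α → M} {b : ι → α}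
    (h : ∀ b' : ι → α, ∑ i, f i (b i) ≤ ∑ i, f i (b' i)) (j : ι) (t : α) :
    f j (b j) ≤ f j t := by
  have hrest : ∑ i ∈ Finset.univ.erase j, f i (Function.update b j t i)
      = ∑ i ∈ Finset.univ.erase j, f i (b i) :=
    Finset.sum_congr rfl fun i hi => by rw [Function.update_of_ne (Finset.ne_of_mem_erase hi)]
  have := h (Function.update b j t)
  rw [← Finset.add_sum_erase _ _ (Finset.mem_univ j),
    ← Finset.add_sum_erase _ _ (Finset.mem_univ j), Function.update_self, hrest] at this
  exact le_of_add_le_add_right this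

section Lagrangian

variable {n p : ℕ} (x : Fin p → EuclideanSpace ℝ (Fin n)) (y : EuclideanSpace ℝ (Fin n))
  {l0 l1 l2 : ℝ}

lemma inner_Xmul (β : EuclideanSpace ℝ (Fin p)) (α : EuclideanSpace ℝ (Fin n)) :
    inner ℝ α (Xmul x β) = ∑ j, inner ℝ (x j) α * β j := by
  simp [Xmul, inner_sum, real_inner_smul_right, real_inner_comm, mul_comm]

lemma Lag_eq_sum_lagTerm (β : EuclideanSpace ℝ (Fin p)) (α : EuclideanSpace ℝ (Fin n)) :
    Lag x y l0 l1 l2 β α =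
      ∑ j, lagTerm l0 l1 l2 (inner ℝ (x j) α) (β j) - (1 / 2) * ‖α‖ ^ 2 - inner ℝ y α := by
  simp only [Lag, lagTerm, inner_Xmul, zeroNorm, oneNorm, EuclideanSpace.real_norm_sq_eq,
    Finset.natCast_card_filter, Finset.sum_add_distrib, Finset.mul_sum]
  ring

lemma Lag_eq_Pobj_sub (β : EuclideanSpace ℝ (Fin p)) (α : EuclideanSpace ℝ (Fin n)) :
    Lag x y l0 l1 l2 β α = Pobj x y l0 l1 l2 β - (1 / 2) * ‖α - (Xmul x β - y)‖ ^ 2 := by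
  simp only [Lag, Pobj, norm_sub_sq_real, inner_sub_right, real_inner_comm]
  ring

lemma Lag_le_Pobj (β : EuclideanSpace ℝ (Fin p)) (α : EuclideanSpace ℝ (Fin n)) :
    Lag x y l0 l1 l2 β α ≤ Pobj x y l0 l1 l2 β := by
  rw [Lag_eq_Pobj_sub]
  linarith [sq_nonneg ‖α - (Xmul x β - y)‖]

lemma Dobj_le_Lag (hl0 : 0 ≤ l0) (hl2 : 0 < l2) (β : EuclideanSpace ℝ (Fin p))
    (α : EuclideanSpace ℝ (Fin n)) : Dobj x y l0 l1 l2 α ≤ Lag x y l0 l1 l2 β α := by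
  rw [Lag_eq_sum_lagTerm, Dobj]
  have := Finset.sum_le_sum fun j (_ : j ∈ Finset.univ) =>
    psi_neg_div_le_lagTerm (l1 := l1) hl0 hl2 (inner ℝ (x j) α) (β j)
  simp only [etav]
  linarith

end Lagrangian

namespace IsSaddle

variable {n p : ℕ} {x : Fin p → EuclideanSpace ℝ (Fin n)} {y : EuclideanSpace ℝ (Fin n)}
  {l0 l1 l2 : ℝ} {βb : EuclideanSpace ℝ (Fin p)} {αb : EuclideanSpace ℝ (Fin n)}

lemma eq_Xmul_sub (hsad : IsSaddle x y l0 l1 l2 βb αb) : αb = Xmul x βb - y := by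
  have h := hsad.1 (Xmul x βb - y)
  rw [Lag_eq_Pobj_sub, Lag_eq_Pobj_sub, sub_self, norm_zero] at h
  have hsq : ‖αb - (Xmul x βb - y)‖ ^ 2 = 0 := le_antisymm (by linarith) (sq_nonneg _)
  simpa [sub_eq_zero] using hsq

lemma norm_sub_le_sqrt_gap (hsad : IsSaddle x y l0 l1 l2 βb αb) (hl0 : 0 ≤ l0) (hl2 : 0 < l2)
    (α : EuclideanSpace ℝ (Fin n)) (β : EuclideanSpace ℝ (Fin p)) :
    ‖α - αb‖ ≤ Real.sqrt (2 * (Pobj x y l0 l1 l2 β - Dobj x y l0 l1 l2 α)) := by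
  have hα : Lag x y l0 l1 l2 βb α = Pobj x y l0 l1 l2 βb - (1 / 2) * ‖α - αb‖ ^ 2 := by
    rw [Lag_eq_Pobj_sub, ← hsad.eq_Xmul_sub]
  have hαb : Lag x y l0 l1 l2 βb αb = Pobj x y l0 l1 l2 βb := by
    rw [Lag_eq_Pobj_sub, ← hsad.eq_Xmul_sub, sub_self, norm_zero]
    ring
  have hmin : Lag x y l0 l1 l2 βb αb ≤ Lag x y l0 l1 l2 β αb := hsad.2 β
  have hP : Lag x y l0 l1 l2 β αb ≤ Pobj x y l0 l1 l2 β := Lag_le_Pobj x y β αb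
  have hD : Dobj x y l0 l1 l2 α ≤ Lag x y l0 l1 l2 βb α := Dobj_le_Lag x y hl0 hl2 βb α
  exact Real.le_sqrt_of_sq_le (by linarith)

lemma lagTerm_nonpos (hsad : IsSaddle x y l0 l1 l2 βb αb) (j : Fin p) :
    lagTerm l0 l1 l2 (inner ℝ (x j) αb) (βb j) ≤ 0 := by
  have hmin (b : Fin p → ℝ) : ∑ k, lagTerm l0 l1 l2 (inner ℝ (x k) αb) (βb k)
      ≤ ∑ k, lagTerm l0 l1 l2 (inner ℝ (x k) αb) (b k) := by
    have := hsad.2 (WithLp.toLp 2 b)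
    rw [Lag_eq_sum_lagTerm, Lag_eq_sum_lagTerm] at this
    simpa using this
  simpa using apply_le_of_sum_le (f := fun k => lagTerm l0 l1 l2 (inner ℝ (x k) αb)) hmin j 0

end IsSaddle

theorem stmt13_general (n p : ℕ) (x : Fin p → EuclideanSpace ℝ (Fin n))
    (y : EuclideanSpace ℝ (Fin n)) (l0 l1 l2 : ℝ)
    (hl0 : 0 < l0) (hl2 : 0 < l2)
    (βb : EuclideanSpace ℝ (Fin p)) (αb : EuclideanSpace ℝ (Fin n))
    (hsad : IsSaddle x y l0 l1 l2 βb αb)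
    (α : EuclideanSpace ℝ (Fin n)) (β : EuclideanSpace ℝ (Fin p))
    (r : ℝ) (hr : r = Real.sqrt (2 * (Pobj x y l0 l1 l2 β - Dobj x y l0 l1 l2 α)))
    (j : Fin p)
    (hscr : |(inner ℝ (x j) α : ℝ)| + ‖x j‖ * r < 2 * Real.sqrt (l0 * l2) + l1) :
    βb j = 0 := by
  by_contra hne
  have hthr := le_abs_of_lagTerm_nonpos hl0.le hl2.le hne (hsad.lagTerm_nonpos j)
  have hdist : ‖αb - α‖ ≤ r := by
    rw [hr, norm_sub_rev]
    exact hsad.norm_sub_le_sqrt_gap hl0.le hl2 α β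
  have hmove : |inner ℝ (x j) αb| ≤ |inner ℝ (x j) α| + ‖x j‖ * r :=
    calc |inner ℝ (x j) αb| = |inner ℝ (x j) α + inner ℝ (x j) (αb - α)| := by
          rw [inner_sub_right, add_sub_cancel]
      _ ≤ |inner ℝ (x j) α| + ‖x j‖ * ‖αb - α‖ :=
          (abs_add_le _ _).trans (add_le_add_right (abs_real_inner_le_norm _ _) _)
      _ ≤ |inner ℝ (x j) α| + ‖x j‖ * r := by gcongr
  linarith

/-- safety of the screening rule. -/
theorem stmt13 (n p : ℕ) (x : Fin p → EuclideanSpace ℝ (Fin n))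
    (y : EuclideanSpace ℝ (Fin n)) (l0 l1 l2 : ℝ)
    (hl0 : 0 < l0) (hl1 : 0 ≤ l1) (hl2 : 0 < l2)
    (βb : EuclideanSpace ℝ (Fin p)) (αb : EuclideanSpace ℝ (Fin n))
    (hsad : IsSaddle x y l0 l1 l2 βb αb)
    (α : EuclideanSpace ℝ (Fin n)) (β : EuclideanSpace ℝ (Fin p))
    (r : ℝ) (hr : r = Real.sqrt (2 * (Pobj x y l0 l1 l2 β - Dobj x y l0 l1 l2 α)))
    (j : Fin p)
    (hscr : |(inner ℝ (x j) α : ℝ)| + ‖x j‖ * r < 2 * Real.sqrt (l0 * l2) + l1) :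
    βb j = 0 :=
  stmt13_general n p x y l0 l1 l2 hl0 hl2 βb αb hsad α β r hr j hscr
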